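/- arXiv:0906.2638 — 2 statements merged into one kernel-verified Lean document; each statement's English description precedes it below -/
import Mathlib

section
/- Let Ω ⊆ ℂ be a nonempty bounded open connected set and let h : Ω → ℝ be a harmonic function. Then the function |h| : Ω → ℝ is not proper; that is, there exists a compact set C ⊆ ℝ whose preimage under |h| is not compact. -/
open Complex Metric

/-- A real-valued function `h` is harmonic on a set `U ⊆ ℂ`: it is twice continuously
differentiable on `U` and its Laplacian (sum of the two pure second directional
derivatives, in the directions `1` and `i`) vanishes at every point of `U`. -/
def HarmOn (h : ℂ → ℝ) (U : Set ℂ) : Prop :=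
  ContDiffOn ℝ 2 h U ∧ ∀ z ∈ U,
    iteratedDeriv 2 (fun t : ℝ => h (z + (t : ℂ))) 0 +
      iteratedDeriv 2 (fun t : ℝ => h (z + (t : ℂ) * Complex.I)) 0 = 0

/-- A map into the Euclidean plane is harmonic on `U` iff both coordinate functions are. -/
def HarmMapOn (f : ℂ → EuclideanSpace ℝ (Fin 2)) (U : Set ℂ) : Prop :=
  HarmOn (fun z => f z 0) U ∧ HarmOn (fun z => f z 1) U

/-!
Suppose every strip `Ω ∩ h⁻¹ [a, b]` were compact. For a smooth tent `G` of height about `d`,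
`G ∘ h` then has compact support in `Ω`, and since `Δ (G ∘ h) = G''(h) ‖∇h‖²` for harmonic `h`,
Green's identity against `Q = ‖z‖² - R²` (where `Ω ⊆ closedBall 0 R`) reads
`∫ G(h) ΔQ = ∫ G''(h) ‖∇h‖² Q`. As `ΔQ` is a positive constant, the left side grows like
`d · vol {|h - c| ≤ 1}`. On the right, `Q ≤ 0` sees only the negative part of `G''`, a fixed bump
`2 φ(h - c)` independent of `d`. Hence `{z ∈ Ω | |h z - c| ≤ 1}` is null, which is absurd when `c`
is a value of `h`, that set then being a neighbourhood of a point.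
-/

open Real Set Filter Topology MeasureTheory Laplacian InnerProductSpace

noncomputable def smoothRamp (x : ℝ) : ℝ := ∫ y in (0 : ℝ)..x, smoothTransition y

theorem hasDerivAt_smoothRamp (x : ℝ) : HasDerivAt smoothRamp (smoothTransition x) x :=
  (smoothTransition.continuous.integral_hasStrictDerivAt 0 x).hasDerivAt

theorem deriv_smoothRamp : deriv smoothRamp = smoothTransition :=
  funext fun x => (hasDerivAt_smoothRamp x).deriv

theorem differentiable_smoothRamp : Differentiable ℝ smoothRamp :=
  fun x => (hasDerivAt_smoothRamp x).differentiableAt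

theorem contDiff_smoothRamp : ContDiff ℝ 2 smoothRamp :=
  contDiff_succ_iff_deriv (n := 1).2
    ⟨differentiable_smoothRamp, by simp, deriv_smoothRamp ▸ smoothTransition.contDiff⟩

theorem monotone_smoothRamp : Monotone smoothRamp :=
  monotone_of_deriv_nonneg differentiable_smoothRamp fun x => by
    rw [deriv_smoothRamp]; exact smoothTransition.nonneg x

theorem convexOn_smoothRamp : ConvexOn ℝ univ smoothRamp :=
  Monotone.convexOn_univ_of_deriv differentiable_smoothRamp
    (deriv_smoothRamp ▸ smoothTransition.monotone)

theorem smoothRamp_of_nonpos {x : ℝ} (hx : x ≤ 0) : smoothRamp x = 0 := by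
  rw [smoothRamp, intervalIntegral.integral_congr (g := fun _ => (0 : ℝ)),
    intervalIntegral.integral_zero]
  intro y hy
  rw [uIcc_of_ge hx] at hy
  exact smoothTransition.zero_of_nonpos hy.2

theorem smoothRamp_of_one_le {x : ℝ} (hx : 1 ≤ x) : smoothRamp x = smoothRamp 1 + (x - 1) := by
  have hint := smoothTransition.continuous.intervalIntegrable (μ := volume)
  rw [smoothRamp, smoothRamp,
    ← intervalIntegral.integral_add_adjacent_intervals (hint 0 1) (hint 1 x),
    intervalIntegral.integral_congr (a := 1) (g := fun _ => (1 : ℝ))]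
  · simp
  intro y hy
  rw [uIcc_of_le hx] at hy
  exact smoothTransition.one_of_one_le hy.1

theorem smoothRamp_one_le_one : smoothRamp 1 ≤ 1 := by
  have := intervalIntegral.integral_mono_on zero_le_one
    (smoothTransition.continuous.intervalIntegrable (μ := volume) _ _) intervalIntegrable_const
    (fun y _ => smoothTransition.le_one y)
  simpa [smoothRamp] using this

noncomputable def smoothTent (c d x : ℝ) : ℝ :=
  smoothRamp (x - c + d) - 2 * smoothRamp (x - c) + smoothRamp (x - c - d)

theorem smoothTent_nonneg (c d x : ℝ) : 0 ≤ smoothTent c d x := by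
  have := convexOn_smoothRamp.2 (mem_univ (x - c + d)) (mem_univ (x - c - d))
    (by norm_num : (0 : ℝ) ≤ 1 / 2) (by norm_num : (0 : ℝ) ≤ 1 / 2) (by norm_num)
  rw [show (1 / 2 : ℝ) • (x - c + d) + (1 / 2 : ℝ) • (x - c - d) = x - c by simp; ring] at this
  simp only [smul_eq_mul] at this
  unfold smoothTent
  linarith

theorem tsupport_smoothTent_subset (c : ℝ) {d : ℝ} (hd : 0 ≤ d) :
    tsupport (smoothTent c d) ⊆ Icc (c - d) (c + d + 1) := by
  refine closure_minimal (fun x hx => ?_) isClosed_Icc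
  by_contra hout
  rcases not_and_or.1 hout with hlo | hhi
  · apply hx
    simp only [smoothTent, smoothRamp_of_nonpos (by linarith : x - c + d ≤ 0),
      smoothRamp_of_nonpos (by linarith : x - c ≤ 0),
      smoothRamp_of_nonpos (by linarith : x - c - d ≤ 0)]
    ring
  · apply hx
    simp only [smoothTent, smoothRamp_of_one_le (by linarith : 1 ≤ x - c + d),
      smoothRamp_of_one_le (by linarith : 1 ≤ x - c),
      smoothRamp_of_one_le (by linarith : 1 ≤ x - c - d)]
    ring

theorem sub_three_le_smoothTent {c d x : ℝ} (hd : 2 ≤ d) (hx : |x - c| ≤ 1) :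
    d - 3 ≤ smoothTent c d x := by
  obtain ⟨hx₁, hx₂⟩ := abs_le.1 hx
  have := monotone_smoothRamp hx₂
  have := smoothRamp_one_le_one
  rw [smoothTent, smoothRamp_of_one_le (by linarith : 1 ≤ x - c + d),
    smoothRamp_of_nonpos (by linarith : x - c - d ≤ 0)]
  linarith

theorem contDiff_smoothTent (c d : ℝ) : ContDiff ℝ 2 (smoothTent c d) := by
  have h := contDiff_smoothRamp
  have hc : ContDiff ℝ 2 fun x : ℝ => x - c := contDiff_id.sub contDiff_const
  exact ((h.comp (hc.add contDiff_const)).sub (contDiff_const.mul (h.comp hc))).add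
    (h.comp (hc.sub contDiff_const))

theorem neg_two_mul_le_deriv_deriv_smoothTent (c d x : ℝ) :
    -2 * deriv smoothTransition (x - c) ≤ deriv (deriv (smoothTent c d)) x := by
  set φ := deriv smoothTransition
  have hφ : ∀ y, HasDerivAt smoothTransition (φ y) y := fun y =>
    ((smoothTransition.contDiff (n := 1)).differentiable one_ne_zero y).hasDerivAt
  have hd1 : deriv (smoothTent c d) = fun x =>
      smoothTransition (x - c + d) - 2 * smoothTransition (x - c) + smoothTransition (x - c - d) :=
    funext fun x => (((hasDerivAt_smoothRamp _).comp_add_const _ d).comp_sub_const x c |>.sub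
      (((hasDerivAt_smoothRamp _).comp_sub_const x c).const_mul 2) |>.add
      (((hasDerivAt_smoothRamp _).comp_sub_const _ d).comp_sub_const x c)).deriv
  have hd2 : deriv (deriv (smoothTent c d)) x = φ (x - c + d) - 2 * φ (x - c) + φ (x - c - d) := by
    rw [hd1]
    exact (((hφ _).comp_add_const _ d).comp_sub_const x c |>.sub
      (((hφ _).comp_sub_const x c).const_mul 2) |>.add
      (((hφ _).comp_sub_const _ d).comp_sub_const x c)).deriv
  have := smoothTransition.monotone.deriv_nonneg (x := x - c + d)
  have := smoothTransition.monotone.deriv_nonneg (x := x - c - d)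
  rw [hd2]
  linarith

theorem deriv_deriv_smoothTent_mul_le (c d x : ℝ) {W q R : ℝ} (hW : 0 ≤ W) (hq : q ≤ 0)
    (hqR : -R ^ 2 ≤ q) :
    deriv (deriv (smoothTent c d)) x * (W * q) ≤
      deriv smoothTransition (x - c) * (2 * R ^ 2 * W) := by
  have hφ : 0 ≤ deriv smoothTransition (x - c) := smoothTransition.monotone.deriv_nonneg
  nlinarith [mul_le_mul_of_nonpos_right (neg_two_mul_le_deriv_deriv_smoothTent c d x)
    (mul_nonpos_of_nonneg_of_nonpos hW hq), mul_nonneg hφ hW]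

theorem tsupport_deriv_smoothTransition_comp_sub_subset (c : ℝ) :
    tsupport (fun x => deriv smoothTransition (x - c)) ⊆ Icc c (c + 1) := by
  refine closure_minimal (fun x hx => ?_) isClosed_Icc
  by_contra hout
  apply hx
  rcases not_and_or.1 hout with hx₀ | hx₁
  · have hev : smoothTransition =ᶠ[𝓝 (x - c)] fun _ => 0 :=
      (eventually_lt_nhds (by linarith [lt_of_not_ge hx₀] : x - c < 0)).mono
        fun y hy => smoothTransition.zero_of_nonpos hy.le
    simp only [hev.deriv_eq, deriv_const]
  · have hev : smoothTransition =ᶠ[𝓝 (x - c)] fun _ => 1 :=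
      (eventually_gt_nhds (by linarith [lt_of_not_ge hx₁] : 1 < x - c)).mono
        fun y hy => smoothTransition.one_of_one_le hy.le
    simp only [hev.deriv_eq, deriv_const]

section Indicator

variable {X F : Type*} [TopologicalSpace X] [Zero F] {Ω K : Set X} {f : X → F} {x : X}

theorem indicator_eventuallyEq_of_mem (hΩ : IsOpen Ω) (hx : x ∈ Ω) :
    Ω.indicator f =ᶠ[𝓝 x] f :=
  eventuallyEq_of_mem (hΩ.mem_nhds hx) fun _ hy => indicator_of_mem hy f

theorem indicator_eventuallyEq_zero_of_notMem (hK : IsClosed K) (hfK : EqOn f 0 (Ω \ K))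
    (hx : x ∉ K) : Ω.indicator f =ᶠ[𝓝 x] 0 :=
  eventuallyEq_of_mem (hK.isOpen_compl.mem_nhds hx) fun y hy => by
    by_cases hyΩ : y ∈ Ω
    · rw [indicator_of_mem hyΩ]; exact hfK ⟨hyΩ, hy⟩
    · exact indicator_of_notMem hyΩ f

theorem hasCompactSupport_indicator_of_eqOn_zero [R1Space X] (hK : IsCompact K)
    (hfK : EqOn f 0 (Ω \ K)) : HasCompactSupport (Ω.indicator f) :=
  HasCompactSupport.intro hK fun x hx => by
    by_cases hxΩ : x ∈ Ω
    · rw [indicator_of_mem hxΩ]; exact hfK ⟨hxΩ, hx⟩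
    · exact indicator_of_notMem hxΩ f

theorem ContinuousOn.continuous_indicator [TopologicalSpace F] (hf : ContinuousOn f Ω)
    (hΩ : IsOpen Ω) (hK : IsClosed K) (hKΩ : K ⊆ Ω) (hfK : EqOn f 0 (Ω \ K)) :
    Continuous (Ω.indicator f) := by
  refine continuous_iff_continuousAt.2 fun x => ?_
  by_cases hx : x ∈ Ω
  · exact (hf.continuousAt (hΩ.mem_nhds hx)).congr (indicator_eventuallyEq_of_mem hΩ hx).symm
  · exact continuousAt_const.congr
      (indicator_eventuallyEq_zero_of_notMem hK hfK fun hxK => hx (hKΩ hxK)).symm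

theorem ContinuousOn.integrableOn_of_eqOn_zero {E : Type*} [NormedAddCommGroup E]
    [MeasurableSpace X] [OpensMeasurableSpace X] [T2Space X] {μ : Measure X}
    [IsFiniteMeasureOnCompacts μ] {f : X → E} (hf : ContinuousOn f Ω) (hΩ : IsOpen Ω)
    (hK : IsCompact K) (hKΩ : K ⊆ Ω) (hfK : EqOn f 0 (Ω \ K)) : IntegrableOn f Ω μ :=
  (integrable_indicator_iff hΩ.measurableSet).1 <|
    (hf.continuous_indicator hΩ hK.isClosed hKΩ hfK).integrable_of_hasCompactSupport
      (hasCompactSupport_indicator_of_eqOn_zero hK hfK)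

end Indicator

theorem ContDiffOn.contDiff_indicator {𝕜 E F : Type*} [NontriviallyNormedField 𝕜]
    [NormedAddCommGroup E] [NormedSpace 𝕜 E] [NormedAddCommGroup F] [NormedSpace 𝕜 F]
    {Ω K : Set E} {f : E → F} {n : WithTop ℕ∞} (hf : ContDiffOn 𝕜 n f Ω) (hΩ : IsOpen Ω)
    (hK : IsClosed K) (hKΩ : K ⊆ Ω) (hfK : EqOn f 0 (Ω \ K)) :
    ContDiff 𝕜 n (Ω.indicator f) := by
  refine contDiff_iff_contDiffAt.2 fun x => ?_
  by_cases hx : x ∈ Ω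
  · exact (hf.contDiffAt (hΩ.mem_nhds hx)).congr_of_eventuallyEq
      (indicator_eventuallyEq_of_mem hΩ hx)
  · exact contDiffAt_const.congr_of_eventuallyEq
      (indicator_eventuallyEq_zero_of_notMem hK hfK fun hxK => hx (hKΩ hxK))

section SecondDerivative

variable {𝕜 E F : Type*} [NontriviallyNormedField 𝕜] [NormedAddCommGroup E] [NormedSpace 𝕜 E]
  [NormedAddCommGroup F] [NormedSpace 𝕜 F] {f : E → F} {x : E}

theorem ContDiffAt.iteratedFDeriv_two_apply (hf : ContDiffAt 𝕜 2 f x) (v w : E) :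
    iteratedFDeriv 𝕜 2 f x ![v, w] = fderiv 𝕜 (fun y => fderiv 𝕜 f y w) x v := by
  have hdf : DifferentiableAt 𝕜 (fderiv 𝕜 f) x :=
    (hf.fderiv_right (m := 1) le_rfl).differentiableAt one_ne_zero
  rw [_root_.iteratedFDeriv_two_apply, fderiv_clm_apply hdf (differentiableAt_const w)]
  simp

theorem hasDerivAt_comp_add_smul {f : E → F} {z v : E} {s : 𝕜}
    (hf : DifferentiableAt 𝕜 f (z + s • v)) :
    HasDerivAt (fun t : 𝕜 => f (z + t • v)) (fderiv 𝕜 f (z + s • v) v) s := by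
  have hline : HasDerivAt (fun t : 𝕜 => z + t • v) v s := by
    simpa using ((hasDerivAt_id s).smul_const v).const_add z
  simpa [Function.comp_def] using hf.hasFDerivAt.comp_hasDerivAt s hline

theorem ContDiffAt.iteratedDeriv_two_comp_add_smul (hf : ContDiffAt 𝕜 2 f x) (v : E) :
    iteratedDeriv 2 (fun t : 𝕜 => f (x + t • v)) 0 = iteratedFDeriv 𝕜 2 f x ![v, v] := by
  have hline : Tendsto (fun t : 𝕜 => x + t • v) (𝓝 0) (𝓝 x) := by
    have hc : Continuous fun t : 𝕜 => x + t • v := by fun_prop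
    simpa using hc.tendsto 0
  have hnear : ∀ᶠ t in 𝓝 (0 : 𝕜), DifferentiableAt 𝕜 f (x + t • v) :=
    hline.eventually ((hf.eventually (by simp)).mono fun y hy => hy.differentiableAt two_ne_zero)
  have hderiv : deriv (fun t : 𝕜 => f (x + t • v)) =ᶠ[𝓝 0]
      fun t => fderiv 𝕜 f (x + t • v) v :=
    hnear.mono fun t ht => (hasDerivAt_comp_add_smul ht).deriv
  have hdf : DifferentiableAt 𝕜 (fun y => fderiv 𝕜 f y v) (x + (0 : 𝕜) • v) := by
    simpa using ((hf.fderiv_right (m := 1) le_rfl).clm_apply contDiffAt_const).differentiableAt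
      one_ne_zero
  rw [iteratedDeriv_succ, iteratedDeriv_one, hderiv.deriv_eq, (hasDerivAt_comp_add_smul hdf).deriv,
    hf.iteratedFDeriv_two_apply]
  simp

end SecondDerivative

theorem HasCompactSupport.integrable_mul {X : Type*} [TopologicalSpace X] [MeasurableSpace X]
    [OpensMeasurableSpace X] {μ : Measure X} [IsFiniteMeasureOnCompacts μ] {f g : X → ℝ}
    (hcs : HasCompactSupport f) (hf : Continuous f) (hg : Continuous g) :
    Integrable (fun x => f x * g x) μ :=
  (hf.mul hg).integrable_of_hasCompactSupport hcs.mul_right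

section Green

variable {E : Type*} [NormedAddCommGroup E] [MeasurableSpace E] [BorelSpace E] {μ : Measure E}

theorem integral_mul_iteratedFDeriv_two_eq [NormedSpace ℝ E] [FiniteDimensional ℝ E]
    [μ.IsAddHaarMeasure] {u Q : E → ℝ} (hu : ContDiff ℝ 2 u) (hQ : ContDiff ℝ 2 Q)
    (hcs : HasCompactSupport u) (v : E) :
    ∫ x, u x * iteratedFDeriv ℝ 2 Q x ![v, v] ∂μ =
      ∫ x, iteratedFDeriv ℝ 2 u x ![v, v] * Q x ∂μ := by
  have hC1 : ∀ {f : E → ℝ}, ContDiff ℝ 2 f → ContDiff ℝ 1 fun x => fderiv ℝ f x v :=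
    fun hf => (hf.fderiv_right le_rfl).clm_apply contDiff_const
  have hD : ∀ {f : E → ℝ}, ContDiff ℝ 1 f → Continuous fun x => fderiv ℝ f x v :=
    fun hf => (hf.continuous_fderiv one_ne_zero).clm_apply continuous_const
  have hu₁ := hC1 hu
  have hQ₁ := hC1 hQ
  have hu₂ := hD hu₁
  have hQ₂ := hD hQ₁
  have hcs₁ : HasCompactSupport fun x => fderiv ℝ u x v := hcs.fderiv_apply ℝ v
  simp only [hu.contDiffAt.iteratedFDeriv_two_apply, hQ.contDiffAt.iteratedFDeriv_two_apply]
  calc ∫ x, u x * fderiv ℝ (fun y => fderiv ℝ Q y v) x v ∂μ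
      = -∫ x, fderiv ℝ u x v * fderiv ℝ Q x v ∂μ :=
        integral_mul_fderiv_eq_neg_fderiv_mul_of_integrable
          (hcs₁.integrable_mul hu₁.continuous hQ₁.continuous)
          (hcs.integrable_mul hu.continuous hQ₂) (hcs.integrable_mul hu.continuous hQ₁.continuous)
          (fun x _ => hu.differentiable two_ne_zero x)
          (fun x _ => hQ₁.differentiable one_ne_zero x)
    _ = ∫ x, fderiv ℝ (fun y => fderiv ℝ u y v) x v * Q x ∂μ := by
        rw [integral_mul_fderiv_eq_neg_fderiv_mul_of_integrable
          ((hcs₁.fderiv_apply ℝ v).integrable_mul hu₂ hQ.continuous)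
          (hcs₁.integrable_mul hu₁.continuous hQ₁.continuous)
          (hcs₁.integrable_mul hu₁.continuous hQ.continuous)
          (fun x _ => hu₁.differentiable one_ne_zero x)
          (fun x _ => hQ.differentiable two_ne_zero x), neg_neg]

theorem integral_mul_laplacian_eq [InnerProductSpace ℝ E] [FiniteDimensional ℝ E]
    [μ.IsAddHaarMeasure] {u Q : E → ℝ} (hu : ContDiff ℝ 2 u) (hQ : ContDiff ℝ 2 Q)
    (hcs : HasCompactSupport u) : ∫ x, u x * Δ Q x ∂μ = ∫ x, Δ u x * Q x ∂μ := by
  have hD2 : ∀ {f : E → ℝ}, ContDiff ℝ 2 f → ∀ m : Fin 2 → E,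
      Continuous fun x => iteratedFDeriv ℝ 2 f x m :=
    fun hf m => (hf.continuous_iteratedFDeriv le_rfl).eval_const m
  simp only [laplacian_eq_iteratedFDeriv_stdOrthonormalBasis, Finset.mul_sum, Finset.sum_mul]
  have hcs₂ : ∀ m : Fin 2 → E, HasCompactSupport fun x => iteratedFDeriv ℝ 2 u x m :=
    fun m => (hcs.iteratedFDeriv (𝕜 := ℝ) 2).comp_left (g := fun L : E [×2]→L[ℝ] ℝ => L m) rfl
  rw [integral_finsetSum _ fun i _ => hcs.integrable_mul hu.continuous (hD2 hQ _),
    integral_finsetSum _ fun i _ => (hcs₂ _).integrable_mul (hD2 hu _) hQ.continuous]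
  exact Finset.sum_congr rfl fun i _ => integral_mul_iteratedFDeriv_two_eq hu hQ hcs _

end Green

section ChainRule

variable {E : Type*} [NormedAddCommGroup E] {G : ℝ → ℝ} {h : E → ℝ} {x : E}

theorem ContDiffAt.iteratedFDeriv_two_comp_left [NormedSpace ℝ E] (hG : ContDiff ℝ 2 G)
    (hh : ContDiffAt ℝ 2 h x) (v : E) :
    iteratedFDeriv ℝ 2 (G ∘ h) x ![v, v] =
      deriv (deriv G) (h x) * fderiv ℝ h x v ^ 2 +
        deriv G (h x) * iteratedFDeriv ℝ 2 h x ![v, v] := by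
  have hG' : ContDiff ℝ 1 (deriv G) := (contDiff_succ_iff_deriv (n := 1).1 hG).2.2
  have hcomp : ∀ y, DifferentiableAt ℝ h y →
      HasFDerivAt (fun y => deriv G (h y)) (deriv (deriv G) (h y) • fderiv ℝ h y) y :=
    fun y hy => ((hG'.differentiable one_ne_zero _).hasDerivAt).comp_hasFDerivAt y hy.hasFDerivAt
  have hev : (fun y => fderiv ℝ (G ∘ h) y v) =ᶠ[𝓝 x] fun y => deriv G (h y) * fderiv ℝ h y v :=
    (hh.eventually (by simp)).mono fun y hy => by
      simp only
      rw [(((hG.differentiable two_ne_zero _).hasDerivAt).comp_hasFDerivAt y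
        (hy.differentiableAt two_ne_zero).hasFDerivAt).fderiv]
      simp
  have hdh : HasFDerivAt (fun y => fderiv ℝ h y v) (fderiv ℝ (fun y => fderiv ℝ h y v) x) x :=
    (((hh.fderiv_right (m := 1) le_rfl).clm_apply contDiffAt_const).differentiableAt
      one_ne_zero).hasFDerivAt
  rw [(hG.contDiffAt.comp x hh).iteratedFDeriv_two_apply, hh.iteratedFDeriv_two_apply,
    hev.fderiv_eq, ((hcomp x (hh.differentiableAt two_ne_zero)).fun_mul hdh).fderiv]
  simp only [add_apply, smul_apply, smul_eq_mul]
  ring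

variable [InnerProductSpace ℝ E] [FiniteDimensional ℝ E]

theorem ContDiffAt.laplacian_comp_left (hG : ContDiff ℝ 2 G) (hh : ContDiffAt ℝ 2 h x) :
    Δ (G ∘ h) x = deriv (deriv G) (h x) * ‖fderiv ℝ h x‖ ^ 2 + deriv G (h x) * Δ h x := by
  simp only [laplacian_eq_iteratedFDeriv_stdOrthonormalBasis, hh.iteratedFDeriv_two_comp_left hG,
    Finset.sum_add_distrib, ← Finset.mul_sum, (stdOrthonormalBasis ℝ E).norm_dual]

theorem laplacian_norm_sq_sub (c : ℝ) (x : E) :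
    Δ (fun y : E => ‖y‖ ^ 2 - c) x = 2 * Module.finrank ℝ E := by
  have hQ : ContDiff ℝ 2 fun y : E => ‖y‖ ^ 2 - c := (contDiff_norm_sq ℝ).sub contDiff_const
  have hdir : ∀ v : E, iteratedFDeriv ℝ 2 (fun y : E => ‖y‖ ^ 2 - c) x ![v, v] = 2 * ‖v‖ ^ 2 := by
    intro v
    have hfd : (fun y => fderiv ℝ (fun y : E => ‖y‖ ^ 2 - c) y v) =
        (2 • innerSL ℝ v : E →L[ℝ] ℝ) := by
      funext y
      rw [fderiv_sub_const, (hasStrictFDerivAt_norm_sq y).hasFDerivAt.fderiv]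
      simp [real_inner_comm]
    rw [hQ.contDiffAt.iteratedFDeriv_two_apply, hfd, ContinuousLinearMap.fderiv]
    simp
  simp [laplacian_eq_iteratedFDeriv_stdOrthonormalBasis, hdir,
    (stdOrthonormalBasis ℝ E).orthonormal.1 _, mul_comm]

end ChainRule

theorem HarmOn.laplacian_eq_zero {h : ℂ → ℝ} {Ω : Set ℂ} (hh : HarmOn h Ω) (hΩ : IsOpen Ω)
    {z : ℂ} (hz : z ∈ Ω) : Δ h z = 0 := by
  have hC := hh.1.contDiffAt (hΩ.mem_nhds hz)
  rw [laplacian_eq_iteratedFDeriv_complexPlane]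
  dsimp only
  rw [← hC.iteratedDeriv_two_comp_add_smul, ← hC.iteratedDeriv_two_comp_add_smul]
  simpa [Complex.real_smul] using hh.2 z hz

theorem setIntegral_comp_mul_laplacian_eq {E : Type*} [NormedAddCommGroup E]
    [InnerProductSpace ℝ E] [FiniteDimensional ℝ E] [MeasurableSpace E] [BorelSpace E]
    {μ : Measure E} [μ.IsAddHaarMeasure] {Ω K : Set E} {h Q : E → ℝ} {G : ℝ → ℝ}
    (hΩ : IsOpen Ω) (hh : ContDiffOn ℝ 2 h Ω) (hΔ : ∀ x ∈ Ω, Δ h x = 0) (hG : ContDiff ℝ 2 G)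
    (hQ : ContDiff ℝ 2 Q) (hK : IsCompact K) (hKΩ : K ⊆ Ω) (hGK : EqOn (G ∘ h) 0 (Ω \ K)) :
    ∫ x in Ω, G (h x) * Δ Q x ∂μ =
      ∫ x in Ω, deriv (deriv G) (h x) * ‖fderiv ℝ h x‖ ^ 2 * Q x ∂μ := by
  have hu : ContDiff ℝ 2 (Ω.indicator (G ∘ h)) :=
    (hG.comp_contDiffOn hh).contDiff_indicator hΩ hK.isClosed hKΩ hGK
  have hΔu : Δ (Ω.indicator (G ∘ h)) =
      Ω.indicator fun x => deriv (deriv G) (h x) * ‖fderiv ℝ h x‖ ^ 2 := by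
    funext x
    by_cases hx : x ∈ Ω
    · rw [(laplacian_congr_nhds (indicator_eventuallyEq_of_mem hΩ hx)).eq_of_nhds,
        indicator_of_mem hx, (hh.contDiffAt (hΩ.mem_nhds hx)).laplacian_comp_left hG, hΔ x hx,
        mul_zero, add_zero]
    · rw [(laplacian_congr_nhds (indicator_eventuallyEq_zero_of_notMem hK.isClosed hGK
        fun hxK => hx (hKΩ hxK))).eq_of_nhds, indicator_of_notMem hx,
        show (0 : E → ℝ) = fun _ => 0 from rfl, laplacian_const]
      rfl
  have hgreen := integral_mul_laplacian_eq (μ := μ) hu hQ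
    (hasCompactSupport_indicator_of_eqOn_zero hK hGK)
  simp only [hΔu, ← indicator_mul_left, integral_indicator hΩ.measurableSet] at hgreen
  exact hgreen

section Strips

variable {X : Type*} {Ω : Set X} {h : X → ℝ} {g : ℝ → ℝ} {a b : ℝ}

theorem eqOn_comp_zero_of_tsupport_subset [TopologicalSpace X] (hg : tsupport g ⊆ Icc a b) :
    EqOn (g ∘ h) 0 (Ω \ (Ω ∩ h ⁻¹' Icc a b)) := fun _ hx =>
  image_eq_zero_of_notMem_tsupport (f := g) fun hmem => hx.2 ⟨hx.1, hg hmem⟩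

theorem integrableOn_comp_mul_of_tsupport_subset [TopologicalSpace X] [MeasurableSpace X]
    [OpensMeasurableSpace X] [T2Space X] {μ : Measure X} [IsFiniteMeasureOnCompacts μ]
    {k : X → ℝ} (hΩ : IsOpen Ω) (hh : ContinuousOn h Ω) (hk : ContinuousOn k Ω) (hg : Continuous g)
    (hgab : tsupport g ⊆ Icc a b) (hcpt : IsCompact (Ω ∩ h ⁻¹' Icc a b)) :
    IntegrableOn (fun x => g (h x) * k x) Ω μ :=
  ((hg.comp_continuousOn hh).mul hk).integrableOn_of_eqOn_zero hΩ hcpt inter_subset_left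
    fun x hx => by
      simp [show g (h x) = 0 from eqOn_comp_zero_of_tsupport_subset hgab hx]

end Strips

section Harmonic

variable {E : Type*} [NormedAddCommGroup E] [InnerProductSpace ℝ E] [FiniteDimensional ℝ E]
  {Ω : Set E} {h : E → ℝ}

theorem setIntegral_smoothTent_comp_le [MeasurableSpace E] [BorelSpace E] {μ : Measure E}
    [μ.IsAddHaarMeasure] {R : ℝ} (hΩR : Ω ⊆ closedBall 0 R) (hΩ : IsOpen Ω)
    (hh : ContDiffOn ℝ 2 h Ω) (hΔ : ∀ x ∈ Ω, Δ h x = 0)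
    (hcpt : ∀ a b, IsCompact (Ω ∩ h ⁻¹' Icc a b)) (c : ℝ) {d : ℝ} (hd : 0 ≤ d) :
    ∫ x in Ω, smoothTent c d (h x) * (2 * Module.finrank ℝ E) ∂μ ≤
      ∫ x in Ω, deriv smoothTransition (h x - c) * (2 * R ^ 2 * ‖fderiv ℝ h x‖ ^ 2) ∂μ := by
  have hT := contDiff_smoothTent c d
  have hTsupp := tsupport_smoothTent_subset c hd
  have hW : ContinuousOn (fun x => ‖fderiv ℝ h x‖ ^ 2) Ω :=
    ((hh.continuousOn_fderiv_of_isOpen hΩ one_le_two).norm).pow 2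
  have hQ : ContDiff ℝ 2 fun x : E => ‖x‖ ^ 2 - R ^ 2 := (contDiff_norm_sq ℝ).sub contDiff_const
  have hT'' : Continuous (deriv (deriv (smoothTent c d))) :=
    (contDiff_succ_iff_deriv (n := 1).1 hT).2.2.continuous_deriv le_rfl
  have hφ : Continuous fun y => deriv smoothTransition (y - c) :=
    (smoothTransition.contDiff (n := 1)).continuous_deriv le_rfl |>.comp
      (continuous_id.sub continuous_const)
  have hgreen := setIntegral_comp_mul_laplacian_eq (μ := μ) hΩ hh hΔ hT hQ (hcpt _ _)
    inter_subset_left (eqOn_comp_zero_of_tsupport_subset hTsupp)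
  simp only [laplacian_norm_sq_sub, mul_assoc] at hgreen
  rw [hgreen]
  refine setIntegral_mono_on
    (integrableOn_comp_mul_of_tsupport_subset hΩ hh.continuousOn
      (hW.mul hQ.continuous.continuousOn) hT''
      ((tsupport_deriv_subset.trans tsupport_deriv_subset).trans hTsupp) (hcpt _ _))
    (integrableOn_comp_mul_of_tsupport_subset (g := fun y => deriv smoothTransition (y - c)) hΩ
      hh.continuousOn (continuousOn_const.mul hW) hφ
      (tsupport_deriv_smoothTransition_comp_sub_subset c) (hcpt _ _))
    hΩ.measurableSet fun x hx => ?_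
  have hxR : ‖x‖ ≤ R := by simpa using hΩR hx
  exact deriv_deriv_smoothTent_mul_le c d (h x) (by positivity)
    (by nlinarith [norm_nonneg x]) (by nlinarith [norm_nonneg x])

theorem finrank_mul_measureReal_le [MeasurableSpace E] [BorelSpace E] {μ : Measure E}
    [μ.IsAddHaarMeasure] {R : ℝ} (hΩR : Ω ⊆ closedBall 0 R) (hΩ : IsOpen Ω)
    (hh : ContDiffOn ℝ 2 h Ω) (hΔ : ∀ x ∈ Ω, Δ h x = 0)
    (hcpt : ∀ a b, IsCompact (Ω ∩ h ⁻¹' Icc a b)) (c : ℝ) {d : ℝ} (hd : 2 ≤ d) :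
    2 * Module.finrank ℝ E * μ.real (Ω ∩ h ⁻¹' Icc (c - 1) (c + 1)) * (d - 3) ≤
      ∫ x in Ω, deriv smoothTransition (h x - c) * (2 * R ^ 2 * ‖fderiv ℝ h x‖ ^ 2) ∂μ := by
  set n : ℝ := (Module.finrank ℝ E : ℝ)
  set S := Ω ∩ h ⁻¹' Icc (c - 1) (c + 1)
  have hint : IntegrableOn (fun x => smoothTent c d (h x) * (2 * n)) Ω μ :=
    integrableOn_comp_mul_of_tsupport_subset hΩ hh.continuousOn continuousOn_const
      (contDiff_smoothTent c d).continuous (tsupport_smoothTent_subset c (by linarith)) (hcpt _ _)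
  calc 2 * n * μ.real S * (d - 3) = μ.real S • ((d - 3) * (2 * n)) := by
        rw [smul_eq_mul]; ring
    _ ≤ ∫ x in S, smoothTent c d (h x) * (2 * n) ∂μ := by
        refine setIntegral_ge_of_const_le (hcpt _ _).measurableSet (hcpt _ _).measure_lt_top.ne
          (fun x hx => ?_) (hint.mono_set inter_subset_left)
        have hx₁ : |h x - c| ≤ 1 := abs_sub_le_iff.2 ⟨by linarith [hx.2.2], by linarith [hx.2.1]⟩
        exact mul_le_mul_of_nonneg_right (sub_three_le_smoothTent hd hx₁) (by positivity)
    _ ≤ ∫ x in Ω, smoothTent c d (h x) * (2 * n) ∂μ :=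
        setIntegral_mono_set hint
          (ae_of_all _ fun x => mul_nonneg (smoothTent_nonneg _ _ _) (by positivity))
          (ae_of_all _ inter_subset_left)
    _ ≤ _ := setIntegral_smoothTent_comp_le hΩR hΩ hh hΔ hcpt c (by linarith)

end Harmonic

theorem not_forall_isCompact_inter_preimage_Icc {E : Type*} [NormedAddCommGroup E]
    [InnerProductSpace ℝ E] [FiniteDimensional ℝ E] [Nontrivial E] {Ω : Set E} {h : E → ℝ}
    (hne : Ω.Nonempty) (hbd : Bornology.IsBounded Ω) (hΩ : IsOpen Ω) (hh : ContDiffOn ℝ 2 h Ω)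
    (hΔ : ∀ x ∈ Ω, Δ h x = 0) : ¬ ∀ a b, IsCompact (Ω ∩ h ⁻¹' Icc a b) := by
  intro hcpt
  borelize E
  obtain ⟨R, hR⟩ := hbd.subset_closedBall 0
  obtain ⟨z₀, hz₀⟩ := hne
  set μ : Measure E := Measure.addHaar
  set S := Ω ∩ h ⁻¹' Icc (h z₀ - 1) (h z₀ + 1)
  have hS : S ∈ 𝓝 z₀ := inter_mem (hΩ.mem_nhds hz₀)
    ((hh.continuousOn.continuousAt (hΩ.mem_nhds hz₀)).preimage_mem_nhds
      (Icc_mem_nhds (by linarith) (by linarith)))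
  have hA : 0 < 2 * (Module.finrank ℝ E : ℝ) * μ.real S := by
    have := Module.finrank_pos (R := ℝ) (M := E)
    have := ENNReal.toReal_pos (μ.measure_pos_of_mem_nhds hS).ne' (hcpt _ _).measure_lt_top.ne
    positivity
  set A := 2 * (Module.finrank ℝ E : ℝ) * μ.real S
  set J := ∫ x in Ω, deriv smoothTransition (h x - h z₀) * (2 * R ^ 2 * ‖fderiv ℝ h x‖ ^ 2) ∂μ
  have hJ : J < A * (max 2 (J / A + 4) - 3) :=
    (div_lt_iff₀' hA).1 (by linarith [le_max_right 2 (J / A + 4)])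
  exact hJ.not_ge (finrank_mul_measureReal_le hR hΩ hh hΔ hcpt (h z₀) (le_max_left _ _))

theorem abs_harmonic_not_proper_general (Ω : Set ℂ) (hne : Ω.Nonempty) (hbd : Bornology.IsBounded Ω)
    (hopen : IsOpen Ω) (h : ℂ → ℝ) (hh : HarmOn h Ω) :
    ∃ C : Set ℝ, IsCompact C ∧ ¬ IsCompact ((fun p : Ω => |h p|) ⁻¹' C) := by
  by_contra! hproper
  refine not_forall_isCompact_inter_preimage_Icc hne hbd hopen hh.1
    (fun z hz => hh.laplacian_eq_zero hopen hz) fun a b => ?_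
  rw [← Subtype.image_preimage_coe]
  exact ((hproper _ (isCompact_Icc (a := 0) (b := max |a| |b|))).of_isClosed_subset
    (isClosed_Icc.preimage hh.1.continuousOn.domRestrict)
    fun p hp => ⟨abs_nonneg _, abs_le_max_abs_abs hp.1 hp.2⟩).image continuous_subtype_val

/-- On a nonempty bounded open connected set `Ω ⊆ ℂ`, the absolute value of a harmonic
function is never a proper map to `ℝ`: some compact set of `ℝ` has non-compact preimage. -/
theorem abs_harmonic_not_proper (Ω : Set ℂ) (hne : Ω.Nonempty) (hbd : Bornology.IsBounded Ω)
    (hopen : IsOpen Ω) (hconn : IsConnected Ω) (h : ℂ → ℝ) (hh : HarmOn h Ω) :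
    ∃ C : Set ℝ, IsCompact C ∧ ¬ IsCompact ((fun p : Ω => |h p|) ⁻¹' C) :=
  abs_harmonic_not_proper_general Ω hne hbd hopen h hh
end

section
/- Let T > 0. There do not exist harmonic functions x, y : 𝔻 → ℝ on the open unit disk such that the map 𝔻 → (ℝ/Tℤ) × ℝ sending p to (x(p) mod T, y(p)) is proper. Equivalently, there is no proper harmonic map from the unit disk into the complete flat cylinder of circumference T. -/
open Complex Metric

open Set

/-!
A harmonic function attains its central value on every circle around the centre (mean value
property plus connectedness of the circle). If `p ↦ (x p mod T, y p)` were proper, then, `ℝ/Tℤ`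
being compact, the level set `{y = y 0}` would be a compact subset of the disk, hence contained
in a smaller disk of radius `r < 1`; but `y` takes the value `y 0` on every circle of radius in
`(r, 1)`.
-/

theorem iteratedDeriv_two_comp_line {E F : Type*} [NormedAddCommGroup E] [NormedSpace ℝ E]
    [NormedAddCommGroup F] [NormedSpace ℝ F] {f : E → F} {z : E} (hf : ContDiffAt ℝ 2 f z)
    (v : E) :
    iteratedDeriv 2 (fun t : ℝ => f (z + t • v)) 0 = iteratedFDeriv ℝ 2 f z ![v, v] := by
  have hderiv : deriv (fun t : ℝ => z + t • v) = fun _ => v := by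
    ext t; simp [deriv_smul_const]
  have hline : ContDiff ℝ 2 (fun t : ℝ => z + t • v) := by fun_prop
  have hv : (![v, v] : Fin 2 → E) = fun _ => v := by ext i; fin_cases i <;> rfl
  rw [← Function.comp_def f, iteratedDeriv_vcomp_two (by simpa using hf) hline.contDiffAt,
    iteratedDeriv_succ, iteratedDeriv_one, hderiv, hv]
  simp

theorem HarmOn.harmonicOnNhd {f : ℂ → ℝ} {U : Set ℂ} (hf : HarmOn f U) (hU : IsOpen U) :
    InnerProductSpace.HarmonicOnNhd f U := by
  intro z hz
  refine ⟨hf.1.contDiffAt (hU.mem_nhds hz), ?_⟩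
  filter_upwards [hU.mem_nhds hz] with w hw
  have hfw := hf.1.contDiffAt (hU.mem_nhds hw)
  have h₁ := iteratedDeriv_two_comp_line hfw 1
  have h₂ := iteratedDeriv_two_comp_line hfw I
  simp only [Complex.real_smul, mul_one] at h₁ h₂
  rw [InnerProductSpace.laplacian_eq_iteratedFDeriv_complexPlane, Pi.zero_apply]
  simpa only [h₁, h₂] using hf.2 w hw

theorem InnerProductSpace.HarmonicOnNhd.exists_mem_sphere_le {f : ℂ → ℝ} {c : ℂ} {r : ℝ}
    (hf : HarmonicOnNhd f (closedBall c r)) (hr : 0 ≤ r) : ∃ z ∈ sphere c r, f z ≤ f c := by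
  have hcont : ContinuousOn f (sphere c r) := hf.continuousOn.mono sphere_subset_closedBall
  obtain ⟨z, hz, hmin⟩ := (isCompact_sphere c r).exists_isMinOn
    (NormedSpace.sphere_nonempty.mpr hr) hcont
  rw [← abs_of_nonneg hr] at hf hmin
  refine ⟨z, hz, ?_⟩
  calc f z = Real.circleAverage (fun _ => f z) c r := (Real.circleAverage_const _ _ _).symm
    _ ≤ Real.circleAverage f c r :=
        Real.circleAverage_mono (circleIntegrable_const _ _ _) (hcont.circleIntegrable hr) hmin
    _ = f c := hf.circleAverage_eq

theorem InnerProductSpace.HarmonicOnNhd.exists_mem_sphere_eq {f : ℂ → ℝ} {c : ℂ} {r : ℝ}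
    (hf : HarmonicOnNhd f (closedBall c r)) (hr : 0 ≤ r) : ∃ z ∈ sphere c r, f z = f c := by
  obtain ⟨z₁, hz₁, hle⟩ := hf.exists_mem_sphere_le hr
  obtain ⟨z₂, hz₂, hge⟩ := hf.neg.exists_mem_sphere_le hr
  have hconn : IsPreconnected (sphere c r) :=
    (isConnected_sphere (by simp [Complex.rank_real_complex]) c hr).isPreconnected
  exact hconn.intermediate_value hz₁ hz₂ (hf.continuousOn.mono sphere_subset_closedBall)
    ⟨hle, neg_le_neg_iff.mp hge⟩

/-- There is no proper harmonic map from the open unit disk into the flat cylinder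
`(ℝ/Tℤ) × ℝ`: no pair of harmonic functions `x, y` on `𝔻` makes
`p ↦ (x p mod T, y p)` proper. -/
theorem no_proper_harmonic_map_to_cylinder (T : ℝ) (hT : 0 < T) :
    ¬ ∃ x y : ℂ → ℝ, HarmOn x (Metric.ball (0 : ℂ) 1) ∧ HarmOn y (Metric.ball (0 : ℂ) 1) ∧
      IsProperMap (fun p : Metric.ball (0 : ℂ) 1 =>
        (((x p : ℝ) : AddCircle T), y p)) := by
  rintro ⟨x, y, -, hy, hproper⟩
  have : Fact (0 < T) := ⟨hT⟩
  set L : Set ℂ := Subtype.val ''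
    ((fun p : ball (0 : ℂ) 1 => (((x p : ℝ) : AddCircle T), y p)) ⁻¹' (univ ×ˢ {y 0}))
  have hL_compact : IsCompact L :=
    (hproper.isCompact_preimage (isCompact_univ.prod isCompact_singleton)).image
      continuous_subtype_val
  obtain ⟨r, hr, hLr⟩ := exists_lt_subset_ball hL_compact.isClosed <| by
    rintro _ ⟨p, -, rfl⟩
    exact p.2
  obtain ⟨z, hz, hyz⟩ := ((hy.harmonicOnNhd isOpen_ball).mono
    (closedBall_subset_ball (max_lt one_pos hr))).exists_mem_sphere_eq (le_max_left 0 r)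
  have hz_norm : ‖z‖ = max 0 r := mem_sphere_zero_iff_norm.mp hz
  have hz_disk : z ∈ ball (0 : ℂ) 1 := mem_ball_zero_iff.mpr (hz_norm ▸ max_lt one_pos hr)
  have hz_L : z ∈ L := ⟨⟨z, hz_disk⟩, ⟨mem_univ _, hyz⟩, rfl⟩
  have hz_small : ‖z‖ < r := mem_ball_zero_iff.mp (hLr hz_L)
  linarith [le_max_right 0 r]
end
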